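/- arXiv:1806.10038 — 9 statements merged into one kernel-verified Lean document; each statement's English description precedes it below -/
import Mathlib

section
/- Let (Ω,μ) and (Ω',ν) be measure spaces, ν finite, and let A, A^l, A^u : L¹(μ) → L^∞(ν) be continuous linear operators with A^l ≤ A ≤ A^u on the positive cone, i.e. A^l u ≤ A u ≤ A^u u for every u ∈ L¹(μ) with u ≥ 0. Let f, f^l, f^u ∈ L^∞(ν) and ε > 0 satisfy f^u − f ≥ ε·𝟙 and f − f^l ≥ ε·𝟙. Suppose there exists ū ∈ L¹(μ) with ū ≥ 0 and Aū = f. Then for every (ω₁, ω₂) ∈ L^∞(ν) × L^∞(ν) with ‖ω₁‖_∞ ≤ ε and ‖ω₂‖_∞ ≤ ε there exist u ∈ L¹(μ) with u ≥ 0 and k₁, k₂ ∈ L^∞(ν) with k₁ ≤ 0 and k₂ ≤ 0 such that ω₁ = A^l u − f^u − k₁ and ω₂ = f^l − A^u u − k₂; in particular, 0 belongs to the interior (in L^∞(ν) × L^∞(ν)) of the set {(A^l u − f^u − k₁, f^l − A^u u − k₂) : u ∈ L¹(μ), u ≥ 0, k₁ ≤ 0, k₂ ≤ 0} (Robinson regularity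 of the primal problem). -/
open MeasureTheory
open scoped ENNReal

/-! The single point `u = ū` serves every perturbation: since `A^l ū ≤ f ≤ A^u ū` and `f` keeps
a margin `ε` from `f^l` and `f^u`, while `‖ω‖_∞ ≤ ε` means `-ε ≤ ω ≤ ε` a.e., the slacks
`k₁ = A^l ū - f^u - ω₁` and `k₂ = f^l - A^u ū - ω₂` are nonpositive. The uniform radius `ε`
then gives a ball around `0` inside the set. -/

theorem MeasureTheory.Lp.ae_norm_le_norm_top {α E : Type*} [MeasurableSpace α] {μ : Measure α}
    [NormedAddCommGroup E] (g : Lp E ∞ μ) : ∀ᵐ x ∂μ, ‖g x‖ ≤ ‖g‖ := by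
  rw [Lp.norm_def, toReal_eLpNorm (Lp.aestronglyMeasurable g)]
  exact ae_le_lpNorm_exponent_top (Lp.memLp g)

theorem MeasureTheory.Lp.le_smul_of_norm_le {α : Type*} [MeasurableSpace α] {μ : Measure α}
    {one : Lp ℝ ∞ μ} (hone : (one : α → ℝ) =ᵐ[μ] fun _ => 1) {g : Lp ℝ ∞ μ} {c : ℝ}
    (hg : ‖g‖ ≤ c) : g ≤ c • one := by
  rw [← Lp.coeFn_le]
  filter_upwards [Lp.ae_norm_le_norm_top g, Lp.coeFn_smul c one, hone] with x hx hsmul hx1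
  simp only [hsmul, Pi.smul_apply, hx1, smul_eq_mul, mul_one]
  exact (le_abs_self _).trans (hx.trans hg)

theorem sub_sub_nonpos_of_add_le_of_neg_le {G : Type*} [AddCommGroup G] [PartialOrder G]
    [IsOrderedAddMonoid G] {a b c e : G} (hab : a + e ≤ b) (hc : -c ≤ e) : a - b - c ≤ 0 := by
  rw [show a - b - c = (a + e - b) + (-c - e) by abel]
  exact add_nonpos (sub_nonpos.2 hab) (sub_nonpos.2 hc)

theorem robinson_regularity_primal_general
    {Ω Ω' : Type*} [MeasurableSpace Ω] [MeasurableSpace Ω']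
    (μ : Measure Ω) (ν : Measure Ω')
    (A Al Au : Lp ℝ 1 μ →L[ℝ] Lp ℝ ⊤ ν)
    (hAl : ∀ u : Lp ℝ 1 μ, 0 ≤ u → Al u ≤ A u)
    (hAu : ∀ u : Lp ℝ 1 μ, 0 ≤ u → A u ≤ Au u)
    (f fl fu : Lp ℝ ⊤ ν) (ε : ℝ) (hε : 0 < ε)
    (one : Lp ℝ ⊤ ν) (hone : (one : Ω' → ℝ) =ᵐ[ν] fun _ => (1 : ℝ))
    (hfu : ε • one ≤ fu - f) (hfl : ε • one ≤ f - fl)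
    (ubar : Lp ℝ 1 μ) (hubar : 0 ≤ ubar) (hAubar : A ubar = f) :
    (∀ ω₁ ω₂ : Lp ℝ ⊤ ν, ‖ω₁‖ ≤ ε → ‖ω₂‖ ≤ ε →
      ∃ (u : Lp ℝ 1 μ) (k₁ k₂ : Lp ℝ ⊤ ν), 0 ≤ u ∧ k₁ ≤ 0 ∧ k₂ ≤ 0 ∧
        ω₁ = Al u - fu - k₁ ∧ ω₂ = fl - Au u - k₂) ∧
    ((0, 0) : Lp ℝ ⊤ ν × Lp ℝ ⊤ ν) ∈ interior
      {w : Lp ℝ ⊤ ν × Lp ℝ ⊤ ν |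
        ∃ (u : Lp ℝ 1 μ) (k₁ k₂ : Lp ℝ ⊤ ν), 0 ≤ u ∧ k₁ ≤ 0 ∧ k₂ ≤ 0 ∧
          w.1 = Al u - fu - k₁ ∧ w.2 = fl - Au u - k₂} := by
  have hAlf : Al ubar + ε • one ≤ fu :=
    calc Al ubar + ε • one ≤ f + (fu - f) := add_le_add (hAubar ▸ hAl ubar hubar) hfu
      _ = fu := add_sub_cancel _ _
  have hflAu : fl + ε • one ≤ Au ubar :=
    calc fl + ε • one ≤ fl + (f - fl) := add_le_add_right hfl fl
      _ = f := add_sub_cancel _ _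
      _ ≤ Au ubar := hAubar ▸ hAu ubar hubar
  have neg_le {ω : Lp ℝ ⊤ ν} (hω : ‖ω‖ ≤ ε) : -ω ≤ ε • one :=
    Lp.le_smul_of_norm_le hone ((norm_neg ω).trans_le hω)
  have decompose (ω₁ ω₂ : Lp ℝ ⊤ ν) (h₁ : ‖ω₁‖ ≤ ε) (h₂ : ‖ω₂‖ ≤ ε) :
      ∃ (u : Lp ℝ 1 μ) (k₁ k₂ : Lp ℝ ⊤ ν), 0 ≤ u ∧ k₁ ≤ 0 ∧ k₂ ≤ 0 ∧
        ω₁ = Al u - fu - k₁ ∧ ω₂ = fl - Au u - k₂ :=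
    ⟨ubar, _, _, hubar, sub_sub_nonpos_of_add_le_of_neg_le hAlf (neg_le h₁),
      sub_sub_nonpos_of_add_le_of_neg_le hflAu (neg_le h₂),
      (sub_sub_cancel _ _).symm, (sub_sub_cancel _ _).symm⟩
  refine ⟨decompose, mem_interior_iff_mem_nhds.2 ?_⟩
  filter_upwards [Metric.closedBall_mem_nhds (0 : Lp ℝ ⊤ ν × Lp ℝ ⊤ ν) hε] with w hw
  rw [mem_closedBall_zero_iff] at hw
  exact decompose w.1 w.2 ((norm_fst_le w).trans hw) ((norm_snd_le w).trans hw)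

/-- Robinson regularity of the primal problem: if `A^l ≤ A ≤ A^u` on the
positive cone, `f^u - f ≥ ε·𝟙`, `f - f^l ≥ ε·𝟙` and there is `ū ≥ 0` with
`Aū = f`, then every pair `(ω₁, ω₂)` with `‖ω₁‖_∞ ≤ ε`, `‖ω₂‖_∞ ≤ ε` can be
written as `ω₁ = A^l u - f^u - k₁`, `ω₂ = f^l - A^u u - k₂` with `u ≥ 0`,
`k₁, k₂ ≤ 0`; in particular `0` is in the interior of the corresponding set. -/
theorem robinson_regularity_primal
    {Ω Ω' : Type*} [MeasurableSpace Ω] [MeasurableSpace Ω']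
    (μ : Measure Ω) (ν : Measure Ω') [IsFiniteMeasure ν]
    (A Al Au : Lp ℝ 1 μ →L[ℝ] Lp ℝ ⊤ ν)
    (hAl : ∀ u : Lp ℝ 1 μ, 0 ≤ u → Al u ≤ A u)
    (hAu : ∀ u : Lp ℝ 1 μ, 0 ≤ u → A u ≤ Au u)
    (f fl fu : Lp ℝ ⊤ ν) (ε : ℝ) (hε : 0 < ε)
    (one : Lp ℝ ⊤ ν) (hone : (one : Ω' → ℝ) =ᵐ[ν] fun _ => (1 : ℝ))
    (hfu : ε • one ≤ fu - f) (hfl : ε • one ≤ f - fl)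
    (ubar : Lp ℝ 1 μ) (hubar : 0 ≤ ubar) (hAubar : A ubar = f) :
    (∀ ω₁ ω₂ : Lp ℝ ⊤ ν, ‖ω₁‖ ≤ ε → ‖ω₂‖ ≤ ε →
      ∃ (u : Lp ℝ 1 μ) (k₁ k₂ : Lp ℝ ⊤ ν), 0 ≤ u ∧ k₁ ≤ 0 ∧ k₂ ≤ 0 ∧
        ω₁ = Al u - fu - k₁ ∧ ω₂ = fl - Au u - k₂) ∧
    ((0, 0) : Lp ℝ ⊤ ν × Lp ℝ ⊤ ν) ∈ interior
      {w : Lp ℝ ⊤ ν × Lp ℝ ⊤ ν |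
        ∃ (u : Lp ℝ 1 μ) (k₁ k₂ : Lp ℝ ⊤ ν), 0 ≤ u ∧ k₁ ≤ 0 ∧ k₂ ≤ 0 ∧
          w.1 = Al u - fu - k₁ ∧ w.2 = fl - Au u - k₂} :=
  robinson_regularity_primal_general μ ν A Al Au hAl hAu f fl fu ε hε one hone hfu hfl ubar hubar
    hAubar
end

section
/- Let (Ω,μ) and (Ω',ν) be measure spaces, let J : L¹(μ) → [0,∞] be convex and absolutely one-homogeneous, let B : L¹(μ) → L^∞(ν) be a continuous linear operator, and let φ ∈ L^∞(ν). Suppose ũ ∈ L¹(μ) is primal feasible: ũ ≥ 0 and Bũ ≤ φ; suppose λ̃ ∈ L^∞(μ) with λ̃ ≥ 0 and μ̃ a positive continuous linear functional on L^∞(ν) are dual feasible: ⟨λ̃, v⟩ − μ̃(Bv) ≤ J(v) for all v ∈ L¹(μ); and suppose strong duality holds: J(ũ) = −μ̃(φ). Then the complementarity conditions μ̃(Bũ − φ) = 0 and ⟨λ̃, ũ⟩ = 0 hold, and moreover ⟨λ̃, ũ⟩ − μ̃(Bũ) = J(ũ), i.e. λ̃ − B*μ̃ is a subgradient of J at ũ.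 -/
/-!
Weak duality, squeezed: positivity of `μ̃` and `Bũ ≤ φ` give `μ̃(Bũ) ≤ μ̃(φ)`, and `⟨λ̃, ũ⟩ ≥ 0`,
so `⟨λ̃, ũ⟩ - μ̃(Bũ) ≥ -μ̃(φ) = J ũ`; dual feasibility at `ũ` is the reverse inequality, and
equality forces both nonnegative slacks `⟨λ̃, ũ⟩` and `μ̃(φ) - μ̃(Bũ)` to vanish.
-/

open MeasureTheory
open scoped ENNReal

theorem MeasureTheory.Lp.integral_mul_nonneg {α : Type*} [MeasurableSpace α] {μ : Measure α}
    {p q : ℝ≥0∞} {f : Lp ℝ p μ} {g : Lp ℝ q μ} (hf : 0 ≤ f) (hg : 0 ≤ g) :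
    0 ≤ ∫ x, f x * g x ∂μ :=
  integral_nonneg_of_ae <| by
    filter_upwards [(Lp.coeFn_nonneg f).2 hf, (Lp.coeFn_nonneg g).2 hg] with x hfx hgx
    exact mul_nonneg hfx hgx

theorem complementarity_of_strong_duality_general
    {Ω Ω' : Type*} [MeasurableSpace Ω] [MeasurableSpace Ω']
    (μ : Measure Ω) (ν : Measure Ω')
    (J : Lp ℝ 1 μ → ℝ≥0∞)
    (B : Lp ℝ 1 μ →L[ℝ] Lp ℝ ⊤ ν) (φ : Lp ℝ ⊤ ν)
    (ut : Lp ℝ 1 μ) (hut : 0 ≤ ut) (hfeas : B ut ≤ φ)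
    (lt : Lp ℝ ⊤ μ) (hlt : 0 ≤ lt)
    (mt : Lp ℝ ⊤ ν →L[ℝ] ℝ) (hmt : ∀ ψ : Lp ℝ ⊤ ν, 0 ≤ ψ → 0 ≤ mt ψ)
    (hdualfeas : ∀ v : Lp ℝ 1 μ,
      ((∫ x, lt x * v x ∂μ - mt (B v) : ℝ) : EReal) ≤ (J v : EReal))
    (hstrong : (J ut : EReal) = ((-(mt φ) : ℝ) : EReal)) :
    mt (B ut - φ) = 0 ∧ (∫ x, lt x * ut x ∂μ) = 0 ∧
    (J ut : EReal) = ((∫ x, lt x * ut x ∂μ - mt (B ut) : ℝ) : EReal) := by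
  set pairing := ∫ x, lt x * ut x ∂μ
  have hpair : 0 ≤ pairing := Lp.integral_mul_nonneg hlt hut
  have hmono : mt (B ut) ≤ mt φ := (monotone_iff_map_nonneg mt).2 hmt hfeas
  have hgap : pairing - mt (B ut) ≤ -mt φ := by
    exact_mod_cast (hdualfeas ut).trans_eq hstrong
  have hpair0 : pairing = 0 := by linarith
  have hslack : mt (B ut) = mt φ := by linarith
  refine ⟨by rw [map_sub, hslack, sub_self], hpair0, ?_⟩
  rw [hstrong, hpair0, hslack, zero_sub]

/-- If `ũ` is primal feasible (`ũ ≥ 0`, `Bũ ≤ φ`), `(λ̃, μ̃)` is dual feasible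
(`⟨λ̃,v⟩ - μ̃(Bv) ≤ J v` for all `v`) and strong duality `J ũ = -μ̃(φ)` holds,
then the complementarity conditions `μ̃(Bũ - φ) = 0` and `⟨λ̃, ũ⟩ = 0` hold
and `⟨λ̃, ũ⟩ - μ̃(Bũ) = J ũ`, i.e. `λ̃ - B*μ̃` is a subgradient of `J` at `ũ`. -/
theorem complementarity_of_strong_duality
    {Ω Ω' : Type*} [MeasurableSpace Ω] [MeasurableSpace Ω']
    (μ : Measure Ω) (ν : Measure Ω')
    (J : Lp ℝ 1 μ → ℝ≥0∞)
    (hconv : ∀ u v : Lp ℝ 1 μ, ∀ t : ℝ, 0 ≤ t → t ≤ 1 →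
      J (t • u + (1 - t) • v) ≤ ENNReal.ofReal t * J u + ENNReal.ofReal (1 - t) * J v)
    (hzero : J 0 = 0)
    (hhom : ∀ (s : ℝ) (u : Lp ℝ 1 μ), J (s • u) = ENNReal.ofReal |s| * J u)
    (B : Lp ℝ 1 μ →L[ℝ] Lp ℝ ⊤ ν) (φ : Lp ℝ ⊤ ν)
    (ut : Lp ℝ 1 μ) (hut : 0 ≤ ut) (hfeas : B ut ≤ φ)
    (lt : Lp ℝ ⊤ μ) (hlt : 0 ≤ lt)
    (mt : Lp ℝ ⊤ ν →L[ℝ] ℝ) (hmt : ∀ ψ : Lp ℝ ⊤ ν, 0 ≤ ψ → 0 ≤ mt ψ)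
    (hdualfeas : ∀ v : Lp ℝ 1 μ,
      ((∫ x, lt x * v x ∂μ - mt (B v) : ℝ) : EReal) ≤ (J v : EReal))
    (hstrong : (J ut : EReal) = ((-(mt φ) : ℝ) : EReal)) :
    mt (B ut - φ) = 0 ∧ (∫ x, lt x * ut x ∂μ) = 0 ∧
    (J ut : EReal) = ((∫ x, lt x * ut x ∂μ - mt (B ut) : ℝ) : EReal) :=
  complementarity_of_strong_duality_general μ ν J B φ ut hut hfeas lt hlt mt hmt hdualfeas hstrong
end

section
/- Let (Ω,μ) and (Ω',ν) be measure spaces, let J : L¹(μ) → [0,∞] be convex and absolutely one-homogeneous, let A : L¹(μ) → L^∞(ν) be a continuous linear operator, and let ū ∈ L¹(μ) satisfy ū ≥ 0 and Aū = f for some f ∈ L^∞(ν). Assume the source condition: there exist positive continuous linear functionals μ̄₁, μ̄₂ on L^∞(ν) such that μ̄₂(Av) − μ̄₁(Av) ≤ J(v) for all v ∈ L¹(μ) and μ̄₂(Aū) − μ̄₁(Aū) = J(ū). Then: (a) μ̄₂(f) − μ̄₁(f) = J(ū); and (b) for every λ ∈ L^∞(μ) with λ ≥ 0 and all positive continuous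 linear functionals μ₁, μ₂ on L^∞(ν) satisfying ⟨λ, v⟩ − μ₁(Av) + μ₂(Av) ≤ J(v) for all v ∈ L¹(μ), one has μ₂(f) − μ₁(f) ≤ J(ū). That is, the pair (0, μ̄) solves the dual limit problem and strong duality holds. -/
open MeasureTheory
open scoped ENNReal

namespace MeasureTheory.Lp

theorem integral_mul_nonneg_s7 {Ω : Type*} [MeasurableSpace Ω] {μ : Measure Ω} {p q : ℝ≥0∞}
    {g : Lp ℝ p μ} {u : Lp ℝ q μ} (hg : 0 ≤ g) (hu : 0 ≤ u) :
    0 ≤ ∫ x, g x * u x ∂μ := by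
  apply integral_nonneg_of_ae
  filter_upwards [(coeFn_nonneg g).mpr hg, (coeFn_nonneg u).mpr hu] with x hgx hux
  exact mul_nonneg hgx hux

end MeasureTheory.Lp

theorem source_condition_solves_dual_limit_general
    {Ω Ω' : Type*} [MeasurableSpace Ω] [MeasurableSpace Ω']
    (μ : Measure Ω) (ν : Measure Ω')
    (J : Lp ℝ 1 μ → ℝ≥0∞)
    (A : Lp ℝ 1 μ →L[ℝ] Lp ℝ ⊤ ν)
    (ubar : Lp ℝ 1 μ) (hubar : 0 ≤ ubar)
    (f : Lp ℝ ⊤ ν) (hAubar : A ubar = f)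
    (mb₁ mb₂ : Lp ℝ ⊤ ν →L[ℝ] ℝ)
    (hsceq : (J ubar : EReal) = ((mb₂ (A ubar) - mb₁ (A ubar) : ℝ) : EReal)) :
    (J ubar : EReal) = ((mb₂ f - mb₁ f : ℝ) : EReal) ∧
    (∀ lam : Lp ℝ ⊤ μ, 0 ≤ lam →
      ∀ m₁ m₂ : Lp ℝ ⊤ ν →L[ℝ] ℝ,
        (∀ ψ : Lp ℝ ⊤ ν, 0 ≤ ψ → 0 ≤ m₁ ψ) →
        (∀ ψ : Lp ℝ ⊤ ν, 0 ≤ ψ → 0 ≤ m₂ ψ) →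
        (∀ v : Lp ℝ 1 μ,
          ((∫ x, lam x * v x ∂μ - m₁ (A v) + m₂ (A v) : ℝ) : EReal) ≤ (J v : EReal)) →
        ((m₂ f - m₁ f : ℝ) : EReal) ≤ (J ubar : EReal)) := by
  refine ⟨by rw [hsceq, hAubar], fun lam hlam m₁ m₂ _ _ hfeas => ?_⟩
  -- weak duality, tested at `v = ū`
  have hfeas_ubar := hfeas ubar
  rw [hAubar] at hfeas_ubar
  have hpairing : 0 ≤ ∫ x, lam x * ubar x ∂μ := Lp.integral_mul_nonneg_s7 hlam hubar
  exact le_trans (EReal.coe_le_coe_iff.mpr (by linarith)) hfeas_ubar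

/-- Under the source condition (existence of positive functionals `μ̄₁, μ̄₂` on
`L^∞(ν)` with `μ̄₂(Av) - μ̄₁(Av) ≤ J v` for all `v` and equality at the
`J`-minimising solution `ū`), the pair `(0, μ̄)` solves the dual limit problem
and strong duality holds: `μ̄₂(f) - μ̄₁(f) = J ū`, and every dual feasible
`(λ, μ₁, μ₂)` has objective value `μ₂(f) - μ₁(f) ≤ J ū`. -/
theorem source_condition_solves_dual_limit
    {Ω Ω' : Type*} [MeasurableSpace Ω] [MeasurableSpace Ω']
    (μ : Measure Ω) (ν : Measure Ω')
    (J : Lp ℝ 1 μ → ℝ≥0∞)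
    (hconv : ∀ u v : Lp ℝ 1 μ, ∀ t : ℝ, 0 ≤ t → t ≤ 1 →
      J (t • u + (1 - t) • v) ≤ ENNReal.ofReal t * J u + ENNReal.ofReal (1 - t) * J v)
    (hzero : J 0 = 0)
    (hhom : ∀ (s : ℝ) (u : Lp ℝ 1 μ), J (s • u) = ENNReal.ofReal |s| * J u)
    (A : Lp ℝ 1 μ →L[ℝ] Lp ℝ ⊤ ν)
    (ubar : Lp ℝ 1 μ) (hubar : 0 ≤ ubar)
    (f : Lp ℝ ⊤ ν) (hAubar : A ubar = f)
    (mb₁ mb₂ : Lp ℝ ⊤ ν →L[ℝ] ℝ)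
    (hmb₁ : ∀ ψ : Lp ℝ ⊤ ν, 0 ≤ ψ → 0 ≤ mb₁ ψ)
    (hmb₂ : ∀ ψ : Lp ℝ ⊤ ν, 0 ≤ ψ → 0 ≤ mb₂ ψ)
    (hsc : ∀ v : Lp ℝ 1 μ, ((mb₂ (A v) - mb₁ (A v) : ℝ) : EReal) ≤ (J v : EReal))
    (hsceq : (J ubar : EReal) = ((mb₂ (A ubar) - mb₁ (A ubar) : ℝ) : EReal)) :
    (J ubar : EReal) = ((mb₂ f - mb₁ f : ℝ) : EReal) ∧
    (∀ lam : Lp ℝ ⊤ μ, 0 ≤ lam →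
      ∀ m₁ m₂ : Lp ℝ ⊤ ν →L[ℝ] ℝ,
        (∀ ψ : Lp ℝ ⊤ ν, 0 ≤ ψ → 0 ≤ m₁ ψ) →
        (∀ ψ : Lp ℝ ⊤ ν, 0 ≤ ψ → 0 ≤ m₂ ψ) →
        (∀ v : Lp ℝ 1 μ,
          ((∫ x, lam x * v x ∂μ - m₁ (A v) + m₂ (A v) : ℝ) : EReal) ≤ (J v : EReal)) →
        ((m₂ f - m₁ f : ℝ) : EReal) ≤ (J ubar : EReal)) :=
  source_condition_solves_dual_limit_general μ ν J A ubar hubar f hAubar mb₁ mb₂ hsceq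
end

section
/- Let (Ω',ν) be a measure space, let φ_n, φ̄ ∈ L^∞(ν), let ε_n > 0 and C₀ ≥ 1 satisfy ε_n·𝟙 ≤ φ_n − φ̄ ≤ C₀·ε_n·𝟙, and let μ_n and μ̄ be positive continuous linear functionals on L^∞(ν) satisfying the mutual optimality inequalities μ̄(−φ_n) ≤ μ_n(−φ_n) and μ_n(−φ̄) ≤ μ̄(−φ̄). Then μ_n(𝟙) ≤ C₀·μ̄(𝟙). (Since for a positive functional μ* on L^∞(ν) one has ‖μ*‖ = μ*(𝟙), this is the bound ‖μ_n‖ ≤ C₀‖μ̄‖ on the dual variables in the case of an exact operator.) -/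
open MeasureTheory
open scoped ENNReal

theorem map_mono_of_map_nonneg {E F G : Type*} [AddCommGroup E] [PartialOrder E]
    [IsOrderedAddMonoid E] [AddCommGroup G] [PartialOrder G] [IsOrderedAddMonoid G]
    [FunLike F E G] [AddMonoidHomClass F E G] {μ : F} (hμ : ∀ ψ : E, 0 ≤ ψ → 0 ≤ μ ψ)
    {a b : E} (hab : a ≤ b) : μ a ≤ μ b :=
  sub_nonneg.1 (by simpa only [map_sub] using hμ _ (sub_nonneg.2 hab))

theorem map_sub_le_of_mutual_optimality {E F G : Type*} [AddCommGroup E] [AddCommGroup G]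
    [PartialOrder G] [IsOrderedAddMonoid G] [FunLike F E G] [AddMonoidHomClass F E G]
    (μ₁ μ₂ : F) {x y : E} (hx : μ₂ (-x) ≤ μ₁ (-x)) (hy : μ₁ (-y) ≤ μ₂ (-y)) :
    μ₁ (x - y) ≤ μ₂ (x - y) := by
  simp only [map_neg, neg_le_neg_iff] at hx hy
  simpa only [map_sub] using sub_le_sub hx hy

theorem dual_variable_bound_exact_operator_general
    {Ω' : Type*} [MeasurableSpace Ω'] (ν : Measure Ω')
    (one : Lp ℝ ⊤ ν)
    (φn φb : Lp ℝ ⊤ ν) (εn C₀ : ℝ) (hεn : 0 < εn)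
    (hlow : εn • one ≤ φn - φb) (hup : φn - φb ≤ (C₀ * εn) • one)
    (μn μb : Lp ℝ ⊤ ν →L[ℝ] ℝ)
    (hμn : ∀ ψ : Lp ℝ ⊤ ν, 0 ≤ ψ → 0 ≤ μn ψ)
    (hμb : ∀ ψ : Lp ℝ ⊤ ν, 0 ≤ ψ → 0 ≤ μb ψ)
    (h1 : μb (-φn) ≤ μn (-φn))
    (h2 : μn (-φb) ≤ μb (-φb)) :
    μn one ≤ C₀ * μb one := by
  have hbound : εn * μn one ≤ εn * (C₀ * μb one) :=
    calc εn * μn one = μn (εn • one) := by rw [map_smul, smul_eq_mul]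
      _ ≤ μn (φn - φb) := map_mono_of_map_nonneg hμn hlow
      _ ≤ μb (φn - φb) := map_sub_le_of_mutual_optimality μn μb h1 h2
      _ ≤ μb ((C₀ * εn) • one) := map_mono_of_map_nonneg hμb hup
      _ = εn * (C₀ * μb one) := by rw [map_smul, smul_eq_mul]; ring
  exact le_of_mul_le_mul_left hbound hεn

/-- Boundedness of the dual variables in the exact-operator case: if
`ε_n·𝟙 ≤ φ_n - φ̄ ≤ C₀·ε_n·𝟙` and the positive functionals `μ_n, μ̄` satisfy
the mutual optimality inequalities `μ̄(-φ_n) ≤ μ_n(-φ_n)` and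
`μ_n(-φ̄) ≤ μ̄(-φ̄)`, then `μ_n(𝟙) ≤ C₀·μ̄(𝟙)`. -/
theorem dual_variable_bound_exact_operator
    {Ω' : Type*} [MeasurableSpace Ω'] (ν : Measure Ω')
    (one : Lp ℝ ⊤ ν) (hone : (one : Ω' → ℝ) =ᵐ[ν] fun _ => (1 : ℝ))
    (φn φb : Lp ℝ ⊤ ν) (εn C₀ : ℝ) (hεn : 0 < εn) (hC₀ : 1 ≤ C₀)
    (hlow : εn • one ≤ φn - φb) (hup : φn - φb ≤ (C₀ * εn) • one)
    (μn μb : Lp ℝ ⊤ ν →L[ℝ] ℝ)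
    (hμn : ∀ ψ : Lp ℝ ⊤ ν, 0 ≤ ψ → 0 ≤ μn ψ)
    (hμb : ∀ ψ : Lp ℝ ⊤ ν, 0 ≤ ψ → 0 ≤ μb ψ)
    (h1 : μb (-φn) ≤ μn (-φn))
    (h2 : μn (-φb) ≤ μb (-φb)) :
    μn one ≤ C₀ * μb one :=
  dual_variable_bound_exact_operator_general ν one φn φb εn C₀ hεn hlow hup μn μb hμn hμb h1 h2
end

section
/- Let (Ω,μ) be a finite measure space and (Ω',ν) a measure space. Let J : L¹(μ) → [0,∞] satisfy J(𝟙_Ω) < ∞ where 𝟙_Ω ∈ L¹(μ) is the constant function 1. Let B, B̄ : L¹(μ) → L^∞(ν) be continuous linear operators with B u ≤ B̄ u for every u ∈ L¹(μ) with u ≥ 0. Let λ ∈ L^∞(μ) with λ ≥ 0 and let μ* be a positive continuous linear functional on L^∞(ν), satisfying the dual feasibility condition ⟨λ, v⟩ − μ*(Bv) ≤ J(v) for all v ∈ L¹(μ). Then ∫ λ dμ ≤ J(𝟙_Ω) + ‖B̄𝟙_Ω‖_∞ · μ*(𝟙), i.e. the L¹ norm of λ is bounded by J(𝟙_Ω)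 + ‖μ*‖·‖B̄𝟙_Ω‖_∞. -/
open MeasureTheory
open scoped ENNReal

/-!
Test dual feasibility at `v = 𝟙_Ω`: then `⟨λ, 𝟙_Ω⟩ = ∫ λ dμ`, and since `μ*` is positive, hence
monotone, `B 𝟙_Ω ≤ B̄ 𝟙_Ω ≤ ‖B̄ 𝟙_Ω‖_∞ • 𝟙` gives `μ*(B 𝟙_Ω) ≤ ‖B̄ 𝟙_Ω‖_∞ · μ*(𝟙)`.
-/

namespace MeasureTheory.Lp

variable {α : Type*} [MeasurableSpace α] {μ : Measure α}

theorem ae_norm_le_norm_top_s10 {E : Type*} [NormedAddCommGroup E] (f : Lp E ∞ μ) :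
    ∀ᵐ x ∂μ, ‖f x‖ ≤ ‖f‖ := by
  rw [Lp.norm_def, toReal_eLpNorm (Lp.aestronglyMeasurable f)]
  exact ae_le_lpNorm_exponent_top (Lp.memLp f)

theorem le_norm_smul_of_ae_eq_one {one : Lp ℝ ∞ μ} (hone : (one : α → ℝ) =ᵐ[μ] fun _ => 1)
    (f : Lp ℝ ∞ μ) : f ≤ ‖f‖ • one := by
  rw [← Lp.coeFn_le]
  filter_upwards [ae_norm_le_norm_top_s10 f, Lp.coeFn_smul ‖f‖ one, hone] with x hf hsmul h1
  simpa [hsmul, h1] using (le_abs_self _).trans hf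

theorem nonneg_of_ae_eq_one {p : ℝ≥0∞} {one : Lp ℝ p μ}
    (hone : (one : α → ℝ) =ᵐ[μ] fun _ => 1) : 0 ≤ one := by
  rw [← Lp.coeFn_nonneg]
  filter_upwards [hone] with x hx
  simp [hx]

end MeasureTheory.Lp

theorem EReal.coe_le_add_of_coe_sub_le {a b c : ℝ} {x : EReal} (h : ((a - b : ℝ) : EReal) ≤ x)
    (hbc : b ≤ c) : (a : EReal) ≤ x + c := by
  induction x using EReal.rec with
  | bot => exact absurd h (EReal.bot_lt_coe _).not_ge
  | coe x =>
    norm_cast at h ⊢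
    linarith
  | top => simp

theorem lagrange_multiplier_lambda_bound_general
    {Ω Ω' : Type*} [MeasurableSpace Ω] [MeasurableSpace Ω']
    (μ : Measure Ω) (ν : Measure Ω')
    (J : Lp ℝ 1 μ → ℝ≥0∞)
    (oneΩ : Lp ℝ 1 μ) (honeΩ : (oneΩ : Ω → ℝ) =ᵐ[μ] fun _ => (1 : ℝ))
    (oneν : Lp ℝ ⊤ ν) (honeν : (oneν : Ω' → ℝ) =ᵐ[ν] fun _ => (1 : ℝ))
    (B Bb : Lp ℝ 1 μ →L[ℝ] Lp ℝ ⊤ ν)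
    (hBB : ∀ u : Lp ℝ 1 μ, 0 ≤ u → B u ≤ Bb u)
    (lam : Lp ℝ ⊤ μ)
    (ms : Lp ℝ ⊤ ν →L[ℝ] ℝ) (hms : ∀ ψ : Lp ℝ ⊤ ν, 0 ≤ ψ → 0 ≤ ms ψ)
    (hfeas : ∀ v : Lp ℝ 1 μ,
      ((∫ x, lam x * v x ∂μ - ms (B v) : ℝ) : EReal) ≤ (J v : EReal)) :
    ((∫ x, lam x ∂μ : ℝ) : EReal) ≤
      (J oneΩ : EReal) + ((‖Bb oneΩ‖ * ms oneν : ℝ) : EReal) := by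
  have hmono : Monotone ms := OrderHomClass.mono (PositiveLinearMap.mk₀ ms.toLinearMap hms)
  have hpair : ∫ x, lam x * oneΩ x ∂μ = ∫ x, lam x ∂μ :=
    integral_congr_ae (by filter_upwards [honeΩ] with x hx; simp [hx])
  have hB : ms (B oneΩ) ≤ ‖Bb oneΩ‖ * ms oneν :=
    calc ms (B oneΩ) ≤ ms (Bb oneΩ) := hmono (hBB oneΩ (Lp.nonneg_of_ae_eq_one honeΩ))
      _ ≤ ms (‖Bb oneΩ‖ • oneν) := hmono (Lp.le_norm_smul_of_ae_eq_one honeν _)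
      _ = ‖Bb oneΩ‖ * ms oneν := by rw [map_smul, smul_eq_mul]
  exact EReal.coe_le_add_of_coe_sub_le (hpair ▸ hfeas oneΩ) hB

/-- Boundedness of the Lagrange multiplier `λ`: if `J(𝟙_Ω) < ∞`, `B ≤ B̄` on
the positive cone, `λ ≥ 0` in `L^∞(μ)` and `μ*` is a positive functional on
`L^∞(ν)` with `⟨λ,v⟩ - μ*(Bv) ≤ J v` for all `v`, then
`∫ λ dμ ≤ J(𝟙_Ω) + ‖B̄𝟙_Ω‖_∞ · μ*(𝟙)`. -/
theorem lagrange_multiplier_lambda_bound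
    {Ω Ω' : Type*} [MeasurableSpace Ω] [MeasurableSpace Ω']
    (μ : Measure Ω) [IsFiniteMeasure μ] (ν : Measure Ω')
    (J : Lp ℝ 1 μ → ℝ≥0∞)
    (oneΩ : Lp ℝ 1 μ) (honeΩ : (oneΩ : Ω → ℝ) =ᵐ[μ] fun _ => (1 : ℝ))
    (oneν : Lp ℝ ⊤ ν) (honeν : (oneν : Ω' → ℝ) =ᵐ[ν] fun _ => (1 : ℝ))
    (hJ1 : J oneΩ < ⊤)
    (B Bb : Lp ℝ 1 μ →L[ℝ] Lp ℝ ⊤ ν)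
    (hBB : ∀ u : Lp ℝ 1 μ, 0 ≤ u → B u ≤ Bb u)
    (lam : Lp ℝ ⊤ μ) (hlam : 0 ≤ lam)
    (ms : Lp ℝ ⊤ ν →L[ℝ] ℝ) (hms : ∀ ψ : Lp ℝ ⊤ ν, 0 ≤ ψ → 0 ≤ ms ψ)
    (hfeas : ∀ v : Lp ℝ 1 μ,
      ((∫ x, lam x * v x ∂μ - ms (B v) : ℝ) : EReal) ≤ (J v : EReal)) :
    ((∫ x, lam x ∂μ : ℝ) : EReal) ≤
      (J oneΩ : EReal) + ((‖Bb oneΩ‖ * ms oneν : ℝ) : EReal) :=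
  lagrange_multiplier_lambda_bound_general μ ν J oneΩ honeΩ oneν honeν B Bb hBB lam ms hms hfeas
end

section
/- Let (Ω,μ) and (Ω',ν) be measure spaces with ν(Ω') > 0, and let ε_n, η_n > 0, C₀ ≥ 1, D₀, M ≥ 0 with η_n ≤ D₀·ε_n. Let B_n, B̄ : L¹(μ) → L^∞(ν) be continuous linear operators with ‖B̄ − B_n‖ ≤ η_n, and let φ_n, φ̄ ∈ L^∞(ν) with φ_n − φ̄ ≤ C₀·ε_n·𝟙. Let u_n, ū ∈ L¹(μ) satisfy u_n ≥ 0, ū ≥ 0, ‖u_n‖₁ ≤ M, B_n u_n ≤ φ_n, B_n ū ≤ φ_n, and B̄ ū = φ̄. Let λ_n ∈ L^∞(μ) with λ_n ≥ 0 and ⟨λ_n, u_n⟩ = 0; let μ_n and μ̂ be positive continuous linear functionals on L^∞(ν) with μ_n(φ_n − B_n u_n) = 0; and let ℓ̂ be a continuous linear functional on L¹(μ) with ℓ̂(u_n) ≥ 0 and ℓ̂(ū) = 0. Then ⟨λ_n, u_n − ū⟩ − μ_n(B_n(u_n − ū)) − ℓ̂(u_n − ū) + μ̂(B̄(u_n −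 ū)) ≤ (C₀·μ̂(𝟙) + D₀·M·‖μ̂‖)·ε_n. (The left-hand side is the symmetric Bregman distance D_J^{symm}(ū, u_n) between the subgradients p_n = λ_n − B_n*μ_n ∈ ∂J(u_n) and p̂ = ℓ̂ − B̄*μ̂ ∈ ∂J(ū), so this is the convergence-rate estimate D_J^{symm}(ū, u_n) = O(ε_n).) -/
/-!
Each of the four terms of the symmetric Bregman distance is controlled separately. By
complementarity and feasibility of `ū`, the first three contribute with the favourable sign:
`⟨λ_n, u_n - ū⟩ = -⟨λ_n, ū⟩ ≤ 0`, `μ_n(B_n u_n) = μ_n(φ_n) ≥ μ_n(B_n ū)` and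
`ℓ̂(u_n - ū) = ℓ̂(u_n) ≥ 0`. For the last one write
`B̄(u_n - ū) = (B̄ - B_n) u_n + (B_n u_n - φ_n) + (φ_n - φ̄)`: the middle summand is `≤ 0`,
the last is `≤ C₀ ε_n 𝟙`, and the first has norm at most `η_n M ≤ D₀ M ε_n`.
-/

open MeasureTheory
open scoped ENNReal

section Pairing

variable {Ω : Type*} [MeasurableSpace Ω] {μ : Measure Ω}

lemma integrable_Linfty_mul_L1 (p : Lp ℝ ∞ μ) (v : Lp ℝ 1 μ) :
    Integrable (fun x => p x * v x) μ :=
  (L1.integrable_coeFn v).mul_of_top_right (Lp.memLp p)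

lemma integral_Linfty_mul_L1_sub (p : Lp ℝ ∞ μ) (u v : Lp ℝ 1 μ) :
    ∫ x, p x * (u - v) x ∂μ = (∫ x, p x * u x ∂μ) - ∫ x, p x * v x ∂μ := by
  rw [← integral_sub (integrable_Linfty_mul_L1 p u) (integrable_Linfty_mul_L1 p v)]
  refine integral_congr_ae ?_
  filter_upwards [Lp.coeFn_sub u v] with x hx
  rw [hx, Pi.sub_apply, mul_sub]

lemma integral_Linfty_mul_L1_nonneg {p : Lp ℝ ∞ μ} {v : Lp ℝ 1 μ} (hp : 0 ≤ p) (hv : 0 ≤ v) :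
    0 ≤ ∫ x, p x * v x ∂μ := by
  refine integral_nonneg_of_ae ?_
  filter_upwards [(Lp.coeFn_nonneg _).2 hp, (Lp.coeFn_nonneg _).2 hv] with x hpx hvx
  exact mul_nonneg hpx hvx

lemma integral_Linfty_mul_L1_sub_nonpos {p : Lp ℝ ∞ μ} {u v : Lp ℝ 1 μ} (hp : 0 ≤ p)
    (hv : 0 ≤ v) (hpu : ∫ x, p x * u x ∂μ = 0) :
    ∫ x, p x * (u - v) x ∂μ ≤ 0 := by
  rw [integral_Linfty_mul_L1_sub, hpu]
  linarith [integral_Linfty_mul_L1_nonneg hp hv]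

end Pairing

section PositiveFunctional

variable {E F : Type*} [NormedAddCommGroup E] [NormedSpace ℝ E]
  [NormedAddCommGroup F] [NormedSpace ℝ F] [PartialOrder F] [IsOrderedAddMonoid F]
  {f : F →L[ℝ] ℝ}

lemma map_sub_nonneg_of_map_sub_eq_zero (hf : ∀ ψ, 0 ≤ ψ → 0 ≤ f ψ) {a b φ : F}
    (hφa : f (φ - a) = 0) (hb : b ≤ φ) : 0 ≤ f (a - b) := by
  have hfb : f b ≤ f φ := (monotone_iff_map_nonneg f).2 hf hb
  rw [map_sub] at hφa ⊢
  linarith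

lemma map_apply_sub_le_of_feasible (hf : ∀ ψ, 0 ≤ ψ → 0 ≤ f ψ) (B Bn : E →L[ℝ] F)
    {u ū : E} {φ φn r : F} (hfeas : Bn u ≤ φn) (hexact : B ū = φ) (hφ : φn - φ ≤ r) :
    f (B (u - ū)) ≤ f r + ‖f‖ * (‖B - Bn‖ * ‖u‖) := by
  have hmono := (monotone_iff_map_nonneg f).2 hf
  have hsplit : B (u - ū) = (B - Bn) u + (Bn u - φn) + (φn - φ) := by
    simp only [map_sub, hexact, sub_apply]
    abel
  have hfeas' : f (Bn u - φn) ≤ 0 := map_zero f ▸ hmono (sub_nonpos.2 hfeas)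
  have herr : f ((B - Bn) u) ≤ ‖f‖ * (‖B - Bn‖ * ‖u‖) :=
    calc f ((B - Bn) u) ≤ ‖f‖ * ‖(B - Bn) u‖ := (le_abs_self _).trans (f.le_opNorm _)
      _ ≤ ‖f‖ * (‖B - Bn‖ * ‖u‖) := by gcongr; exact (B - Bn).le_opNorm u
  rw [hsplit, map_add, map_add]
  linarith [hmono hφ]

end PositiveFunctional

theorem symmetric_bregman_distance_rate_general
    {Ω Ω' : Type*} [MeasurableSpace Ω] [MeasurableSpace Ω']
    (μ : Measure Ω) (ν : Measure Ω') (one : Lp ℝ ⊤ ν)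
    (εn ηn C₀ D₀ M : ℝ) (hηε : ηn ≤ D₀ * εn)
    (Bn Bb : Lp ℝ 1 μ →L[ℝ] Lp ℝ ⊤ ν) (hBclose : ‖Bb - Bn‖ ≤ ηn)
    (φn φb : Lp ℝ ⊤ ν) (hφ : φn - φb ≤ (C₀ * εn) • one)
    (un ubar : Lp ℝ 1 μ) (hubar : 0 ≤ ubar)
    (hunM : ‖un‖ ≤ M)
    (hfeasn : Bn un ≤ φn) (hfeasb : Bn ubar ≤ φn) (hexact : Bb ubar = φb)
    (lamn : Lp ℝ ⊤ μ) (hlamn : 0 ≤ lamn)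
    (hcompl1 : ∫ x, lamn x * un x ∂μ = 0)
    (μn μhat : Lp ℝ ⊤ ν →L[ℝ] ℝ)
    (hμn : ∀ ψ : Lp ℝ ⊤ ν, 0 ≤ ψ → 0 ≤ μn ψ)
    (hμhat : ∀ ψ : Lp ℝ ⊤ ν, 0 ≤ ψ → 0 ≤ μhat ψ)
    (hcompl2 : μn (φn - Bn un) = 0)
    (lhat : Lp ℝ 1 μ →L[ℝ] ℝ) (hlhat1 : 0 ≤ lhat un) (hlhat2 : lhat ubar = 0) :
    (∫ x, lamn x * (un - ubar) x ∂μ) - μn (Bn (un - ubar))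
        - lhat (un - ubar) + μhat (Bb (un - ubar))
      ≤ (C₀ * μhat one + D₀ * M * ‖μhat‖) * εn := by
  have hpairing := integral_Linfty_mul_L1_sub_nonpos hlamn hubar hcompl1
  have hμn_term : 0 ≤ μn (Bn (un - ubar)) := by
    rw [map_sub]
    exact map_sub_nonneg_of_map_sub_eq_zero hμn hcompl2 hfeasb
  have hlhat_term : 0 ≤ lhat (un - ubar) := by
    rwa [map_sub, hlhat2, sub_zero]
  have hμhat_term := map_apply_sub_le_of_feasible hμhat Bb Bn hfeasn hexact hφ
  rw [map_smul, smul_eq_mul] at hμhat_term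
  have hBD : ‖Bb - Bn‖ ≤ D₀ * εn := hBclose.trans hηε
  have hop : ‖Bb - Bn‖ * ‖un‖ ≤ D₀ * εn * M :=
    mul_le_mul hBD hunM (norm_nonneg _) ((norm_nonneg _).trans hBD)
  have hμhat_op := mul_le_mul_of_nonneg_left hop (norm_nonneg μhat)
  calc _ ≤ C₀ * εn * μhat one + ‖μhat‖ * (D₀ * εn * M) := by linarith
    _ = (C₀ * μhat one + D₀ * M * ‖μhat‖) * εn := by ring

/-- Convergence-rate estimate for the symmetric Bregman distance: under the
complementarity conditions and the data/operator error bounds, the symmetric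
Bregman distance
`⟨λ_n, u_n - ū⟩ - μ_n(B_n(u_n - ū)) - ℓ̂(u_n - ū) + μ̂(B̄(u_n - ū))`
is bounded by `(C₀·μ̂(𝟙) + D₀·M·‖μ̂‖)·ε_n`. -/
theorem symmetric_bregman_distance_rate
    {Ω Ω' : Type*} [MeasurableSpace Ω] [MeasurableSpace Ω']
    (μ : Measure Ω) (ν : Measure Ω') (hν : 0 < ν Set.univ)
    (one : Lp ℝ ⊤ ν) (hone : (one : Ω' → ℝ) =ᵐ[ν] fun _ => (1 : ℝ))
    (εn ηn C₀ D₀ M : ℝ) (hεn : 0 < εn) (hηn : 0 < ηn) (hC₀ : 1 ≤ C₀)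
    (hD₀ : 0 ≤ D₀) (hM : 0 ≤ M) (hηε : ηn ≤ D₀ * εn)
    (Bn Bb : Lp ℝ 1 μ →L[ℝ] Lp ℝ ⊤ ν) (hBclose : ‖Bb - Bn‖ ≤ ηn)
    (φn φb : Lp ℝ ⊤ ν) (hφ : φn - φb ≤ (C₀ * εn) • one)
    (un ubar : Lp ℝ 1 μ) (hun : 0 ≤ un) (hubar : 0 ≤ ubar)
    (hunM : ‖un‖ ≤ M)
    (hfeasn : Bn un ≤ φn) (hfeasb : Bn ubar ≤ φn) (hexact : Bb ubar = φb)
    (lamn : Lp ℝ ⊤ μ) (hlamn : 0 ≤ lamn)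
    (hcompl1 : ∫ x, lamn x * un x ∂μ = 0)
    (μn μhat : Lp ℝ ⊤ ν →L[ℝ] ℝ)
    (hμn : ∀ ψ : Lp ℝ ⊤ ν, 0 ≤ ψ → 0 ≤ μn ψ)
    (hμhat : ∀ ψ : Lp ℝ ⊤ ν, 0 ≤ ψ → 0 ≤ μhat ψ)
    (hcompl2 : μn (φn - Bn un) = 0)
    (lhat : Lp ℝ 1 μ →L[ℝ] ℝ) (hlhat1 : 0 ≤ lhat un) (hlhat2 : lhat ubar = 0) :
    (∫ x, lamn x * (un - ubar) x ∂μ) - μn (Bn (un - ubar))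
        - lhat (un - ubar) + μhat (Bb (un - ubar))
      ≤ (C₀ * μhat one + D₀ * M * ‖μhat‖) * εn :=
  symmetric_bregman_distance_rate_general μ ν one εn ηn C₀ D₀ M hηε Bn Bb hBclose φn φb hφ un ubar
    hubar hunM hfeasn hfeasb hexact lamn hlamn hcompl1 μn μhat hμn hμhat hcompl2 lhat hlhat1 hlhat2
end

section
/- Let (Ω,μ) and (Ω',ν) be measure spaces and let J : L¹(μ) → [0,∞] be strongly lower semicontinuous with strongly sequentially compact nonempty sublevel sets {u : J(u) ≤ C}. Let A, A^l_n, A^u_n : L¹(μ) → L^∞(ν) be continuous linear operators with A^l_n u ≤ A u ≤ A^u_n u for all u ≥ 0 and ‖A^u_n − A^l_n‖ → 0 in operator norm; let f, f^l_n, f^u_n ∈ L^∞(ν) with f^l_n ≤ f ≤ f^u_n and ‖f^u_n − f^l_n‖_∞ → 0. Let ū ∈ L¹(μ) satisfy ū ≥ 0, Aū = f, J(ū) < ∞, and J(ū) ≤ J(u) for every u ≥ 0 with Au = f (a J-minimising solution). Then for every n the problem min{J(u) : u ∈ L¹(μ), u ≥ 0, A^l_n u ≤ f^u_n, A^u_n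 u ≥ f^l_n} has a minimiser u_n; J(u_n) ≤ J(ū) for all n; and there is a subsequence of (u_n) converging strongly in L¹(μ) to some u* with u* ≥ 0, Au* = f and J(u*) = J(ū), and along this subsequence J(u_n) → J(ū). -/
/-!
Every perturbed feasible set is closed and contains `ū`, so minimising the lower semicontinuous
`J` over its intersection with the compact sublevel set `{J ≤ J ū}` gives a minimiser `uₙ`, and
all `uₙ` lie in that sublevel set, which yields a convergent subsequence. Sandwiching `A uₙ`
and `f` between the operator and data bounds gives `‖A uₙ - f‖ ≤ ‖Aᵘₙ - Aˡₙ‖ ‖uₙ‖ + ‖fᵘₙ - fˡₙ‖`,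
which tends to `0`, so the limit solves `A u = f`; minimality of `ū` together with lower
semicontinuity then pins down the values of `J`.
-/

open MeasureTheory Filter Topology Set
open scoped ENNReal

theorem lowerSemicontinuous_of_le_liminf_seq {X γ : Type*} [TopologicalSpace X]
    [SequentialSpace X] [CompleteLinearOrder γ] {J : X → γ}
    (hJ : ∀ (x : X) (v : ℕ → X), Tendsto v atTop (𝓝 x) → J x ≤ liminf (fun n => J (v n)) atTop) :
    LowerSemicontinuous J :=
  lowerSemicontinuous_iff_isClosed_preimage.2 fun _ =>
    IsSeqClosed.isClosed fun _ _ hv hx =>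
      (hJ _ _ hx).trans (liminf_le_of_frequently_le' (Frequently.of_forall hv))

theorem exists_isMinOn_of_isSeqCompact_sublevel {X γ : Type*} [TopologicalSpace X]
    [TopologicalSpace.PseudoMetrizableSpace X] [LinearOrder γ] {J : X → γ}
    (hJ : LowerSemicontinuous J) {S : Set X} (hS : IsClosed S) {x₀ : X} (hx₀ : x₀ ∈ S)
    (hcomp : IsSeqCompact {x | J x ≤ J x₀}) :
    ∃ x ∈ S, IsMinOn J S x := by
  have hK : ({x | J x ≤ J x₀} ∩ S).Nonempty := ⟨x₀, le_rfl, hx₀⟩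
  obtain ⟨x, hxK, hmin⟩ := (hJ.lowerSemicontinuousOn _).exists_isMinOn hK
    (hcomp.isCompact.inter_right hS)
  refine ⟨x, hxK.2, isMinOn_iff.2 fun w hw => ?_⟩
  rcases le_or_gt (J w) (J x₀) with hw₀ | hw₀
  · exact isMinOn_iff.1 hmin w ⟨hw₀, hw⟩
  · exact hxK.1.trans hw₀.le

theorem abs_sub_le_of_mem_Icc {F : Type*} [AddCommGroup F] [Lattice F] [IsOrderedAddMonoid F]
    {a al au f fl fu : F} (ha : a ∈ Icc al au) (hf : f ∈ Icc fl fu) (hal : al ≤ fu)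
    (hfl : fl ≤ au) : |a - f| ≤ (au - al) + (fu - fl) := by
  refine abs_le'.2 ⟨?_, ?_⟩
  · calc a - f ≤ au - fl := sub_le_sub ha.2 hf.1
      _ = (au - al) + (fu - fl) - (fu - al) := by abel
      _ ≤ (au - al) + (fu - fl) := sub_le_self _ (sub_nonneg.2 hal)
  · calc -(a - f) = f - a := neg_sub a f
      _ ≤ fu - al := sub_le_sub hf.2 ha.1
      _ = (au - al) + (fu - fl) - (au - fl) := by abel
      _ ≤ (au - al) + (fu - fl) := sub_le_self _ (sub_nonneg.2 hfl)

theorem norm_sub_le_of_mem_Icc {F : Type*} [NormedAddCommGroup F] [Lattice F] [HasSolidNorm F]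
    [IsOrderedAddMonoid F] {a al au f fl fu : F} (ha : a ∈ Icc al au) (hf : f ∈ Icc fl fu)
    (hal : al ≤ fu) (hfl : fl ≤ au) : ‖a - f‖ ≤ ‖au - al‖ + ‖fu - fl‖ := by
  have hnonneg : 0 ≤ (au - al) + (fu - fl) :=
    add_nonneg (sub_nonneg.2 (ha.1.trans ha.2)) (sub_nonneg.2 (hf.1.trans hf.2))
  calc ‖a - f‖ ≤ ‖(au - al) + (fu - fl)‖ := norm_le_norm_of_abs_le_abs <| by
        rw [abs_of_nonneg hnonneg]; exact abs_sub_le_of_mem_Icc ha hf hal hfl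
    _ ≤ ‖au - al‖ + ‖fu - fl‖ := norm_add_le _ _

section FeasibleSet

variable {E F : Type*} [NormedAddCommGroup E] [NormedSpace ℝ E] [PartialOrder E]
  [NormedAddCommGroup F] [NormedSpace ℝ F] [Lattice F]

def feasibleSet (Al Au : E →L[ℝ] F) (fl fu : F) : Set E :=
  {w | 0 ≤ w ∧ Al w ≤ fu ∧ fl ≤ Au w}

theorem isClosed_feasibleSet [ClosedIciTopology E] [OrderClosedTopology F]
    (Al Au : E →L[ℝ] F) (fl fu : F) :
    IsClosed (feasibleSet Al Au fl fu) :=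
  isClosed_Ici.inter <|
    (isClosed_le Al.continuous continuous_const).inter (isClosed_le continuous_const Au.continuous)

section Pointwise

variable {A Al Au : E →L[ℝ] F} {f fl fu : F}

theorem mem_feasibleSet_of_apply_eq (hAl : ∀ u, 0 ≤ u → Al u ≤ A u)
    (hAu : ∀ u, 0 ≤ u → A u ≤ Au u) (hfl : fl ≤ f) (hfu : f ≤ fu) {u : E} (hu : 0 ≤ u)
    (hAuf : A u = f) : u ∈ feasibleSet Al Au fl fu :=
  ⟨hu, (hAl u hu).trans (hAuf ▸ hfu), (hAuf ▸ hfl).trans (hAu u hu)⟩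

theorem norm_apply_sub_le_of_mem_feasibleSet [HasSolidNorm F] [IsOrderedAddMonoid F]
    (hAl : ∀ u, 0 ≤ u → Al u ≤ A u) (hAu : ∀ u, 0 ≤ u → A u ≤ Au u) (hfl : fl ≤ f)
    (hfu : f ≤ fu) {v : E} (hv : v ∈ feasibleSet Al Au fl fu) :
    ‖A v - f‖ ≤ ‖Au - Al‖ * ‖v‖ + ‖fu - fl‖ :=
  calc ‖A v - f‖ ≤ ‖Au v - Al v‖ + ‖fu - fl‖ :=
        norm_sub_le_of_mem_Icc ⟨hAl v hv.1, hAu v hv.1⟩ ⟨hfl, hfu⟩ hv.2.1 hv.2.2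
    _ ≤ ‖Au - Al‖ * ‖v‖ + ‖fu - fl‖ := by
        gcongr; exact (Au - Al).le_opNorm v

end Pointwise

theorem apply_eq_of_tendsto_of_mem_feasibleSet [HasSolidNorm F] [IsOrderedAddMonoid F]
    {A : E →L[ℝ] F} {Al Au : ℕ → E →L[ℝ] F} {f : F} {fl fu : ℕ → F}
    (hAl : ∀ n u, 0 ≤ u → Al n u ≤ A u) (hAu : ∀ n u, 0 ≤ u → A u ≤ Au n u)
    (hAconv : Tendsto (fun n => ‖Au n - Al n‖) atTop (𝓝 0))
    (hfl : ∀ n, fl n ≤ f) (hfu : ∀ n, f ≤ fu n)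
    (hfconv : Tendsto (fun n => ‖fu n - fl n‖) atTop (𝓝 0)) {u : ℕ → E} {x : E}
    (hu : ∀ n, u n ∈ feasibleSet (Al n) (Au n) (fl n) (fu n)) (hx : Tendsto u atTop (𝓝 x)) :
    A x = f := by
  have hbound : Tendsto (fun n => ‖Au n - Al n‖ * ‖u n‖ + ‖fu n - fl n‖) atTop (𝓝 0) := by
    simpa using (hAconv.mul hx.norm).add hfconv
  have hres : Tendsto (fun n => A (u n)) atTop (𝓝 f) :=
    tendsto_iff_norm_sub_tendsto_zero.2 <| squeeze_zero (fun _ => norm_nonneg _)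
      (fun n => norm_apply_sub_le_of_mem_feasibleSet (hAl n) (hAu n) (hfl n) (hfu n) (hu n)) hbound
  exact tendsto_nhds_unique ((A.continuous.tendsto x).comp hx) hres

end FeasibleSet

/-- Convergence of the primal solutions: if `J` is strongly (sequentially)
lower semicontinuous with strongly sequentially compact sublevel sets, the
operator and data bounds converge, and `ū` is a `J`-minimising solution of
`Au = f`, then each perturbed problem has a minimiser, any sequence of such
minimisers satisfies `J(u_n) ≤ J(ū)` and has a subsequence converging strongly
in `L¹(μ)` to a `J`-minimising solution, with convergence of the values of `J`. -/
theorem convergence_of_primal_minimisers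
    {Ω Ω' : Type*} [MeasurableSpace Ω] [MeasurableSpace Ω']
    (μ : Measure Ω) (ν : Measure Ω')
    (J : Lp ℝ 1 μ → ℝ≥0∞)
    (hlsc : ∀ (u : Lp ℝ 1 μ) (v : ℕ → Lp ℝ 1 μ), Tendsto v atTop (𝓝 u) →
      J u ≤ Filter.liminf (fun n => J (v n)) atTop)
    (hcomp : ∀ C : ℝ≥0∞, C ≠ ⊤ → ({u : Lp ℝ 1 μ | J u ≤ C} : Set (Lp ℝ 1 μ)).Nonempty →
      IsSeqCompact {u : Lp ℝ 1 μ | J u ≤ C})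
    (A : Lp ℝ 1 μ →L[ℝ] Lp ℝ ⊤ ν)
    (Aln Aun : ℕ → (Lp ℝ 1 μ →L[ℝ] Lp ℝ ⊤ ν))
    (hAl : ∀ n, ∀ u : Lp ℝ 1 μ, 0 ≤ u → Aln n u ≤ A u)
    (hAu : ∀ n, ∀ u : Lp ℝ 1 μ, 0 ≤ u → A u ≤ Aun n u)
    (hAconv : Tendsto (fun n => ‖Aun n - Aln n‖) atTop (𝓝 0))
    (f : Lp ℝ ⊤ ν) (fln fun' : ℕ → Lp ℝ ⊤ ν)
    (hfl : ∀ n, fln n ≤ f) (hfu : ∀ n, f ≤ fun' n)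
    (hfconv : Tendsto (fun n => ‖fun' n - fln n‖) atTop (𝓝 0))
    (ubar : Lp ℝ 1 μ) (hubar : 0 ≤ ubar) (hAubar : A ubar = f)
    (hJubar : J ubar < ⊤)
    (hmin : ∀ u : Lp ℝ 1 μ, 0 ≤ u → A u = f → J ubar ≤ J u) :
    (∀ n, ∃ un : Lp ℝ 1 μ,
      (0 ≤ un ∧ Aln n un ≤ fun' n ∧ fln n ≤ Aun n un) ∧
      ∀ w : Lp ℝ 1 μ, 0 ≤ w → Aln n w ≤ fun' n → fln n ≤ Aun n w → J un ≤ J w) ∧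
    (∀ u : ℕ → Lp ℝ 1 μ,
      (∀ n, (0 ≤ u n ∧ Aln n (u n) ≤ fun' n ∧ fln n ≤ Aun n (u n)) ∧
        ∀ w : Lp ℝ 1 μ, 0 ≤ w → Aln n w ≤ fun' n → fln n ≤ Aun n w → J (u n) ≤ J w) →
      (∀ n, J (u n) ≤ J ubar) ∧
      ∃ φ : ℕ → ℕ, StrictMono φ ∧ ∃ ustar : Lp ℝ 1 μ,
        Tendsto (fun k => u (φ k)) atTop (𝓝 ustar) ∧
        0 ≤ ustar ∧ A ustar = f ∧ J ustar = J ubar ∧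
        Tendsto (fun k => J (u (φ k))) atTop (𝓝 (J ubar))) := by
  have hfeas : ∀ n, ubar ∈ feasibleSet (Aln n) (Aun n) (fln n) (fun' n) := fun n =>
    mem_feasibleSet_of_apply_eq (hAl n) (hAu n) (hfl n) (hfu n) hubar hAubar
  have hsub : IsSeqCompact {u | J u ≤ J ubar} := hcomp _ hJubar.ne ⟨ubar, le_refl (J ubar)⟩
  refine ⟨fun n => ?_, fun u hu => ?_⟩
  · obtain ⟨un, hun, hunmin⟩ := exists_isMinOn_of_isSeqCompact_sublevel
      (lowerSemicontinuous_of_le_liminf_seq hlsc) (isClosed_feasibleSet _ _ _ _) (hfeas n) hsub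
    exact ⟨un, hun, fun w h0 h1 h2 => isMinOn_iff.1 hunmin w ⟨h0, h1, h2⟩⟩
  have hle : ∀ n, J (u n) ≤ J ubar := fun n => (hu n).2 ubar hubar (hfeas n).2.1 (hfeas n).2.2
  obtain ⟨ustar, hustar, φ, hφ, hlim⟩ := hsub hle
  have hpos : 0 ≤ ustar := ge_of_tendsto' hlim fun k => (hu (φ k)).1.1
  have hA : A ustar = f := apply_eq_of_tendsto_of_mem_feasibleSet (fun k => hAl (φ k))
    (fun k => hAu (φ k)) (hAconv.comp hφ.tendsto_atTop) (fun k => hfl (φ k))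
    (fun k => hfu (φ k)) (hfconv.comp hφ.tendsto_atTop) (fun k => (hu (φ k)).1) hlim
  have hJ : J ustar = J ubar := le_antisymm hustar (hmin ustar hpos hA)
  refine ⟨hle, φ, hφ, ustar, hlim, hpos, hA, hJ, tendsto_of_le_liminf_of_limsup_le ?_ ?_⟩
  · exact hJ ▸ hlsc ustar _ hlim
  · exact limsup_le_of_le (by isBoundedDefault) (.of_forall fun k => hle (φ k))
end

section
/- Let (Ω,μ) be a σ-finite measure space, let u ∈ L¹(μ), and let r ∈ L^∞(μ) satisfy ⟨r,v⟩ ≤ ‖v‖₁ for all v ∈ L¹(μ), ⟨r,u⟩ = ‖u‖₁, and additionally |r| < 1 μ-a.e. on the set {u = 0}. Then for every v ∈ L¹(μ): ⟨r,v⟩ = ‖v‖₁ if and only if v = 0 μ-a.e. on {u = 0} and u·v ≥ 0 μ-a.e. (That is, the model manifold of the L¹ norm at u consists exactly of the functions supported on the support of u whose sign agrees with that of u wherever they are nonzero.) -/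
open MeasureTheory
open scoped ENNReal

/-!
Testing the subgradient inequality against `±𝟙_s` for sets `s` of finite measure gives `|r| ≤ 1`
a.e., so `‖v‖₁ - ⟨r, v⟩ = ∫ (|v| - r v)` has a nonnegative integrand and vanishes iff `r v = |v|`
a.e. Applied to `u`, this forces `r = sign u` on `{u ≠ 0}`, where `r v = |v|` then means
`u v ≥ 0`; on `{u = 0}` the strict bound `|r| < 1` allows `r v = |v|` only for `v = 0`.
-/

namespace MeasureTheory

variable {Ω : Type*} [MeasurableSpace Ω] {μ : Measure Ω}

theorem ae_le_const_of_forall_setIntegral_le [SigmaFinite μ] {f : Ω → ℝ} {C : ℝ}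
    (hf : ∀ s, MeasurableSet s → μ s < ∞ → IntegrableOn f s μ)
    (hle : ∀ s, MeasurableSet s → μ s < ∞ → ∫ x in s, f x ∂μ ≤ C * μ.real s) :
    ∀ᵐ x ∂μ, f x ≤ C := by
  have hnonneg : 0 ≤ᵐ[μ] fun x => C - f x := by
    refine ae_nonneg_of_forall_setIntegral_nonneg_of_sigmaFinite
      (fun s hs hμs => (integrableOn_const hμs.ne).sub (hf s hs hμs)) fun s hs hμs => ?_
    rw [integral_sub (integrableOn_const (C := C) hμs.ne) (hf s hs hμs), setIntegral_const,
      smul_eq_mul, mul_comm, sub_nonneg]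
    exact hle s hs hμs
  filter_upwards [hnonneg] with x hx
  simpa using hx

theorem MemLp.integrableOn_of_measure_lt_top {E : Type*} [NormedAddCommGroup E] {p : ℝ≥0∞}
    {f : Ω → E} (hp : 1 ≤ p) (hf : MemLp f p μ) {s : Set Ω} (hμs : μ s < ∞) :
    IntegrableOn f s μ :=
  have : IsFiniteMeasure (μ.restrict s) := isFiniteMeasure_restrict.mpr hμs.ne
  (hf.restrict s).integrable hp

theorem integral_mul_indicatorConstLp {p : ℝ≥0∞} (f : Ω → ℝ) {s : Set Ω} (hs : MeasurableSet s)
    (hμs : μ s ≠ ∞) (c : ℝ) :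
    ∫ x, f x * indicatorConstLp p hs hμs c x ∂μ = c * ∫ x in s, f x ∂μ := by
  rw [← integral_const_mul, ← integral_indicator hs]
  refine integral_congr_ae ?_
  filter_upwards [indicatorConstLp_coeFn (p := p) (hs := hs) (hμs := hμs) (c := c)] with x hx
  by_cases hxs : x ∈ s <;> simp [hx, hxs, mul_comm]

theorem Lp.ae_abs_le_of_integral_mul_le [SigmaFinite μ] (r : Lp ℝ ∞ μ) {C : ℝ}
    (hr : ∀ v : Lp ℝ 1 μ, ∫ x, r x * v x ∂μ ≤ C * ‖v‖) : ∀ᵐ x ∂μ, |r x| ≤ C := by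
  have hsign : ∀ c : ℝ, |c| = 1 → ∀ᵐ x ∂μ, c * r x ≤ C := by
    intro c hc
    refine ae_le_const_of_forall_setIntegral_le
      (fun s _ hμs => ((Lp.memLp r).integrableOn_of_measure_lt_top le_top hμs).const_mul c)
      fun s hs hμs => ?_
    have := hr (indicatorConstLp 1 hs hμs.ne c)
    rw [integral_const_mul]
    rwa [integral_mul_indicatorConstLp, norm_indicatorConstLp one_ne_zero ENNReal.one_ne_top,
      ENNReal.toReal_one, div_one, Real.rpow_one, Real.norm_eq_abs, hc, one_mul] at this
  filter_upwards [hsign 1 (by simp), hsign (-1) (by simp)] with x h₁ h₂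
  exact abs_le.2 ⟨by linarith, by linarith⟩

theorem integral_mul_eq_integral_abs_iff {r v : Ω → ℝ} (hr : ∀ᵐ x ∂μ, |r x| ≤ 1)
    (hv : Integrable v μ) (hrv : Integrable (fun x => r x * v x) μ) :
    ∫ x, r x * v x ∂μ = ∫ x, |v x| ∂μ ↔ ∀ᵐ x ∂μ, r x * v x = |v x| := by
  have hnonneg : 0 ≤ᵐ[μ] fun x => |v x| - r x * v x := by
    filter_upwards [hr] with x hx
    rw [Pi.zero_apply, sub_nonneg]
    calc r x * v x ≤ |r x * v x| := le_abs_self _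
      _ = |r x| * |v x| := abs_mul _ _
      _ ≤ |v x| := mul_le_of_le_one_left (abs_nonneg _) hx
  rw [eq_comm, ← sub_eq_zero, ← integral_sub hv.abs hrv,
    integral_eq_zero_iff_of_nonneg_ae hnonneg (hv.abs.sub hrv)]
  refine Filter.eventually_congr (.of_forall fun x => ?_)
  simp [sub_eq_zero, eq_comm]

end MeasureTheory

theorem mul_eq_abs_iff_eq_zero_of_abs_lt_one {b c : ℝ} (hc : |c| < 1) : c * b = |b| ↔ b = 0 := by
  refine ⟨fun h => ?_, by rintro rfl; simp⟩
  have : |b| * |c| = |b| * 1 := by rw [mul_one, ← abs_mul, mul_comm, h, abs_abs]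
  exact abs_eq_zero.1 ((mul_eq_mul_left_iff.1 this).resolve_left hc.ne)

theorem mul_eq_abs_iff_mul_nonneg {a b c : ℝ} (hca : c * a = |a|) (ha : a ≠ 0) :
    c * b = |b| ↔ 0 ≤ a * b := by
  have hc : |c| = 1 := by
    have := abs_mul c a
    rw [hca, abs_abs] at this
    exact (mul_eq_right₀ (abs_ne_zero.2 ha)).1 this.symm
  have hab : a * b = |a| * (c * b) := by
    rw [← hca, mul_mul_mul_comm, ← abs_mul_abs_self, hc, one_mul, one_mul]
  rw [hab, mul_nonneg_iff_of_pos_left (abs_pos.2 ha), ← abs_eq_self, abs_mul, hc, one_mul, eq_comm]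

theorem mul_eq_abs_iff_of_mul_eq_abs {a b c : ℝ} (hca : c * a = |a|) (hc : a = 0 → |c| < 1) :
    c * b = |b| ↔ (a = 0 → b = 0) ∧ 0 ≤ a * b := by
  rcases eq_or_ne a 0 with rfl | ha
  · simp [mul_eq_abs_iff_eq_zero_of_abs_lt_one (hc rfl)]
  · simp [ha, mul_eq_abs_iff_mul_nonneg hca ha]

/-- Model manifold of the `L¹` norm: if `r` is a subgradient of the `L¹` norm
at `u` with `|r| < 1` a.e. on `{u = 0}`, then for every `v ∈ L¹(μ)` the Bregman
distance `‖v‖₁ - ⟨r,v⟩` vanishes if and only if `v = 0` a.e. on `{u = 0}` and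
`u·v ≥ 0` a.e. -/
theorem model_manifold_of_l1_norm
    {Ω : Type*} [MeasurableSpace Ω] (μ : Measure Ω) [SigmaFinite μ]
    (u : Lp ℝ 1 μ) (r : Lp ℝ ⊤ μ)
    (hr_le : ∀ v : Lp ℝ 1 μ, ∫ x, r x * v x ∂μ ≤ ‖v‖)
    (hr_eq : ∫ x, r x * u x ∂μ = ‖u‖)
    (hr_lt : ∀ᵐ x ∂μ, u x = 0 → |r x| < 1) :
    ∀ v : Lp ℝ 1 μ,
      (∫ x, r x * v x ∂μ = ‖v‖) ↔
      ((∀ᵐ x ∂μ, u x = 0 → v x = 0) ∧ (∀ᵐ x ∂μ, 0 ≤ u x * v x)) := by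
  have hr_abs : ∀ᵐ x ∂μ, |r x| ≤ 1 := Lp.ae_abs_le_of_integral_mul_le r (by simpa using hr_le)
  have hr_eq_iff (v : Lp ℝ 1 μ) :
      ∫ x, r x * v x ∂μ = ‖v‖ ↔ ∀ᵐ x ∂μ, r x * v x = |v x| := by
    rw [L1.norm_eq_integral_norm]
    exact integral_mul_eq_integral_abs_iff hr_abs (L1.integrable_coeFn v)
      ((L1.integrable_coeFn v).mul_of_top_right (Lp.memLp r))
  have hru := (hr_eq_iff u).1 hr_eq
  intro v
  rw [hr_eq_iff v, ← Filter.eventually_and]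
  refine Filter.eventually_congr ?_
  filter_upwards [hru, hr_lt] with x hux hx
  exact mul_eq_abs_iff_of_mul_eq_abs hux hx
end

section
/- Let (Ω,μ) and (Ω',ν) be measure spaces, let J : L¹(μ) → [0,∞] be absolutely one-homogeneous, let B_n : L¹(μ) → L^∞(ν) be a continuous linear operator and φ_n ∈ L^∞(ν). Let u_n, ū ∈ L¹(μ) with u_n ≥ 0, ū ≥ 0, B_n ū ≤ φ_n; let λ_n ∈ L^∞(μ) with λ_n ≥ 0 and ⟨λ_n, u_n⟩ = 0; and let μ_n be a positive continuous linear functional on L^∞(ν) with μ_n(B_n u_n) = μ_n(φ_n). Assume the subgradient conditions ⟨λ_n, v⟩ − μ_n(B_n v) ≤ J(v) for all v ∈ L¹(μ) and ⟨λ_n, u_n⟩ − μ_n(B_n u_n) = J(u_n). Writing p_n(v) := ⟨λ_n, v⟩ − μ_n(B_n v), the following hold: p_n(u_n) = −μ_n(φ_n) = J(u_n), p_n(ū) ≥ p_n(u_n), and 0 ≤ J(ū) − p_n(ū) ≤ J(ū) − J(u_n). In particular, if J(u_n) → J(ū), then p_n(ū) → J(ū). -/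
open MeasureTheory Filter Topology
open scoped ENNReal

/-! Complementary slackness gives `p_n(u_n) = -μ_n(φ_n)`, while `λ_n ≥ 0`, `ū ≥ 0` and the
positivity of `μ_n` on `φ_n - B_n ū ≥ 0` give `p_n(ū) ≥ -μ_n(φ_n)`. Hence
`J(u_n) = p_n(u_n) ≤ p_n(ū) ≤ J(ū)`, and `p_n(ū)` is squeezed to `J(ū)` whenever `J(u_n)` is. -/

section

variable {Ω : Type*} [MeasurableSpace Ω] {μ : Measure Ω}

theorem integral_mul_nonneg_of_Lp_nonneg {p q : ℝ≥0∞} {f : Lp ℝ p μ} {g : Lp ℝ q μ}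
    (hf : 0 ≤ f) (hg : 0 ≤ g) : 0 ≤ ∫ x, f x * g x ∂μ := by
  refine integral_nonneg_of_ae ?_
  filter_upwards [(Lp.coeFn_nonneg f).2 hf, (Lp.coeFn_nonneg g).2 hg] with x hfx hgx
  exact mul_nonneg hfx hgx

theorem pairing_le_pairing_of_complementary
    {F : Type*} [NormedAddCommGroup F] [NormedSpace ℝ F] [PartialOrder F] [IsOrderedAddMonoid F]
    {p q : ℝ≥0∞} [Fact (1 ≤ p)] {lam : Lp ℝ q μ} (hlam : 0 ≤ lam)
    {L : F →L[ℝ] ℝ} (hL : ∀ ψ : F, 0 ≤ ψ → 0 ≤ L ψ)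
    {B : Lp ℝ p μ →L[ℝ] F} {φ : F} {u v : Lp ℝ p μ}
    (hu_compl : ∫ x, lam x * u x ∂μ = 0) (hu_active : L (B u) = L φ)
    (hv : 0 ≤ v) (hBv : B v ≤ φ) :
    ∫ x, lam x * u x ∂μ - L (B u) ≤ ∫ x, lam x * v x ∂μ - L (B v) := by
  have hlam_v : 0 ≤ ∫ x, lam x * v x ∂μ := integral_mul_nonneg_of_Lp_nonneg hlam hv
  have hL_Bv : L (B v) ≤ L φ := (monotone_iff_map_nonneg L).2 hL hBv
  linarith

end

theorem pairing_with_subgradient_converges_general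
    {Ω Ω' : Type*} [MeasurableSpace Ω] [MeasurableSpace Ω']
    (μ : Measure Ω) (ν : Measure Ω')
    (J : Lp ℝ 1 μ → ℝ≥0∞)
    (Bn : ℕ → (Lp ℝ 1 μ →L[ℝ] Lp ℝ ⊤ ν)) (φn : ℕ → Lp ℝ ⊤ ν)
    (un : ℕ → Lp ℝ 1 μ) (ubar : Lp ℝ 1 μ)
    (hubar : 0 ≤ ubar)
    (hfeasb : ∀ n, Bn n ubar ≤ φn n)
    (lamn : ℕ → Lp ℝ ⊤ μ) (hlamn : ∀ n, 0 ≤ lamn n)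
    (hcompl1 : ∀ n, ∫ x, lamn n x * un n x ∂μ = 0)
    (μn : ℕ → (Lp ℝ ⊤ ν →L[ℝ] ℝ))
    (hμn : ∀ n, ∀ ψ : Lp ℝ ⊤ ν, 0 ≤ ψ → 0 ≤ μn n ψ)
    (hcompl2 : ∀ n, μn n (Bn n (un n)) = μn n (φn n))
    (hsubgrad : ∀ n, ∀ v : Lp ℝ 1 μ,
      ((∫ x, lamn n x * v x ∂μ - μn n (Bn n v) : ℝ) : EReal) ≤ (J v : EReal))
    (hsubgrad_eq : ∀ n,
      ((∫ x, lamn n x * un n x ∂μ - μn n (Bn n (un n)) : ℝ) : EReal)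
        = (J (un n) : EReal)) :
    (∀ n,
      (∫ x, lamn n x * un n x ∂μ - μn n (Bn n (un n)) = -(μn n (φn n))) ∧
      ((J (un n) : EReal)
        = ((∫ x, lamn n x * un n x ∂μ - μn n (Bn n (un n)) : ℝ) : EReal)) ∧
      (∫ x, lamn n x * un n x ∂μ - μn n (Bn n (un n))
        ≤ ∫ x, lamn n x * ubar x ∂μ - μn n (Bn n ubar)) ∧
      ((0 : EReal) ≤ (J ubar : EReal)
          - ((∫ x, lamn n x * ubar x ∂μ - μn n (Bn n ubar) : ℝ) : EReal)) ∧
      ((J ubar : EReal)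
          - ((∫ x, lamn n x * ubar x ∂μ - μn n (Bn n ubar) : ℝ) : EReal)
        ≤ (J ubar : EReal) - (J (un n) : EReal))) ∧
    (Tendsto (fun n => (J (un n) : EReal)) atTop (𝓝 (J ubar : EReal)) →
      Tendsto
        (fun n => ((∫ x, lamn n x * ubar x ∂μ - μn n (Bn n ubar) : ℝ) : EReal))
        atTop (𝓝 (J ubar : EReal))) := by
  have hmin n := pairing_le_pairing_of_complementary (hlamn n) (hμn n) (hcompl1 n) (hcompl2 n)
    hubar (hfeasb n)
  have hlow n : (J (un n) : EReal)
      ≤ ((∫ x, lamn n x * ubar x ∂μ - μn n (Bn n ubar) : ℝ) : EReal) :=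
    hsubgrad_eq n ▸ EReal.coe_le_coe_iff.2 (hmin n)
  refine ⟨fun n => ⟨by rw [hcompl1 n, hcompl2 n, zero_sub], (hsubgrad_eq n).symm, hmin n,
    ?_, EReal.sub_le_sub le_rfl (hlow n)⟩, fun hJ => ?_⟩
  · exact (EReal.sub_nonneg (.inr (EReal.coe_ne_top _)) (.inr (EReal.coe_ne_bot _))).2
      (hsubgrad n ubar)
  · exact tendsto_of_tendsto_of_tendsto_of_le_of_le hJ tendsto_const_nhds hlow
      (fun n => hsubgrad n ubar)

/-- For the optimal primal/dual pairs of the perturbed problems, writing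
`p_n(v) := ⟨λ_n, v⟩ - μ_n(B_n v)`, one has `p_n(u_n) = -μ_n(φ_n) = J(u_n)`,
`p_n(ū) ≥ p_n(u_n)` and `0 ≤ J(ū) - p_n(ū) ≤ J(ū) - J(u_n)`; in particular, if
`J(u_n) → J(ū)` then `p_n(ū) → J(ū)`. -/
theorem pairing_with_subgradient_converges
    {Ω Ω' : Type*} [MeasurableSpace Ω] [MeasurableSpace Ω']
    (μ : Measure Ω) (ν : Measure Ω')
    (J : Lp ℝ 1 μ → ℝ≥0∞)
    (hzero : J 0 = 0)
    (hhom : ∀ (s : ℝ) (u : Lp ℝ 1 μ), J (s • u) = ENNReal.ofReal |s| * J u)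
    (Bn : ℕ → (Lp ℝ 1 μ →L[ℝ] Lp ℝ ⊤ ν)) (φn : ℕ → Lp ℝ ⊤ ν)
    (un : ℕ → Lp ℝ 1 μ) (ubar : Lp ℝ 1 μ)
    (hun : ∀ n, 0 ≤ un n) (hubar : 0 ≤ ubar)
    (hfeasb : ∀ n, Bn n ubar ≤ φn n)
    (lamn : ℕ → Lp ℝ ⊤ μ) (hlamn : ∀ n, 0 ≤ lamn n)
    (hcompl1 : ∀ n, ∫ x, lamn n x * un n x ∂μ = 0)
    (μn : ℕ → (Lp ℝ ⊤ ν →L[ℝ] ℝ))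
    (hμn : ∀ n, ∀ ψ : Lp ℝ ⊤ ν, 0 ≤ ψ → 0 ≤ μn n ψ)
    (hcompl2 : ∀ n, μn n (Bn n (un n)) = μn n (φn n))
    (hsubgrad : ∀ n, ∀ v : Lp ℝ 1 μ,
      ((∫ x, lamn n x * v x ∂μ - μn n (Bn n v) : ℝ) : EReal) ≤ (J v : EReal))
    (hsubgrad_eq : ∀ n,
      ((∫ x, lamn n x * un n x ∂μ - μn n (Bn n (un n)) : ℝ) : EReal)
        = (J (un n) : EReal)) :
    (∀ n,
      (∫ x, lamn n x * un n x ∂μ - μn n (Bn n (un n)) = -(μn n (φn n))) ∧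
      ((J (un n) : EReal)
        = ((∫ x, lamn n x * un n x ∂μ - μn n (Bn n (un n)) : ℝ) : EReal)) ∧
      (∫ x, lamn n x * un n x ∂μ - μn n (Bn n (un n))
        ≤ ∫ x, lamn n x * ubar x ∂μ - μn n (Bn n ubar)) ∧
      ((0 : EReal) ≤ (J ubar : EReal)
          - ((∫ x, lamn n x * ubar x ∂μ - μn n (Bn n ubar) : ℝ) : EReal)) ∧
      ((J ubar : EReal)
          - ((∫ x, lamn n x * ubar x ∂μ - μn n (Bn n ubar) : ℝ) : EReal)
        ≤ (J ubar : EReal) - (J (un n) : EReal))) ∧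
    (Tendsto (fun n => (J (un n) : EReal)) atTop (𝓝 (J ubar : EReal)) →
      Tendsto
        (fun n => ((∫ x, lamn n x * ubar x ∂μ - μn n (Bn n ubar) : ℝ) : EReal))
        atTop (𝓝 (J ubar : EReal))) :=
  pairing_with_subgradient_converges_general μ ν J Bn φn un ubar hubar hfeasb lamn hlamn hcompl1 μn
    hμn hcompl2 hsubgrad hsubgrad_eq
end
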